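/- Let [U_k U_c] ∈ ℝ^{p×p} and [V_k V_c] ∈ ℝ^{m×m} be orthogonal matrices with U_k ∈ ℝ^{p×k} and V_k ∈ ℝ^{m×k}. Let Δ_A ∈ ℝ^{p×m}, Δ_{A,2} = U_c·U_cᵀ·Δ_A·V_c·V_cᵀ, Δ_{A,1} = Δ_A − Δ_{A,2}. Let Δ_Φ ∈ ℝ^{p×q}, let S be a set of entry positions with card(S) = s, and let Δ_{Φ,1} agree with Δ_Φ on S and vanish elsewhere, Δ_{Φ,2} = Δ_Φ − Δ_{Φ,1}. Let λ_A ≥ 0, λ_Φ ≥ 0 and assume the cone condition λ_A·‖Δ_{A,2}‖_* + λ_Φ·‖vec(Δ_{Φ,2})‖₁ ≤ 3·λ_A·‖Δ_{A,1}‖_* + 3·λ_Φ·‖vec(Δ_{Φ,1})‖₁. Then λ_A·‖Δ_A‖_* + λ_Φ·‖vec(Δ_Φ)‖₁ ≤ 4·(λ_A·√(2k)·‖Δ_A‖_F + λ_Φ·√s·‖Δ_Φ‖_F). -/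

import Mathlib

/-!
By the triangle inequalities for both norms and the cone condition,
`Ψ(Δ) ≤ 4 (λ_A ‖Δ_{A,1}‖_* + λ_Φ ‖vec Δ_{Φ,1}‖₁)`. Now
`Δ_{A,1} = U_k U_kᵀ Δ_A + U_c U_cᵀ Δ_A V_k V_kᵀ` has rank at most `2k` and is Frobenius-orthogonal
to `Δ_{A,2}`, so Cauchy–Schwarz over the nonzero singular values gives
`‖Δ_{A,1}‖_* ≤ √(2k) ‖Δ_{A,1}‖_F ≤ √(2k) ‖Δ_A‖_F`; likewise `Δ_{Φ,1}` has at most `s` nonzero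
entries, so `‖vec Δ_{Φ,1}‖₁ ≤ √s ‖Δ_Φ‖_F`. The triangle inequality for the nuclear norm comes
from the duality `‖M‖_* = max {tr(WᵀM) : ‖W‖_op ≤ 1}`, the maximum being attained at the polar
factor of `M`.
-/

open Matrix

/-- The positive semidefinite square root of a positive semidefinite matrix, as
`Matrix.PosSemidef.sqrt` was defined in Mathlib (Dec 2024). -/
noncomputable def psdSqrtOld {n : Type*} [Fintype n] [DecidableEq n] {A : Matrix n n ℝ}
    (hA : A.PosSemidef) : Matrix n n ℝ :=
  hA.1.eigenvectorUnitary.1 * diagonal ((↑) ∘ (√·) ∘ hA.1.eigenvalues) *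
  (star hA.1.eigenvectorUnitary : Matrix n n ℝ)

/-- Frobenius norm of a real matrix: `(tr(MᵀM))^{1/2}`. -/
noncomputable def frobNorm {m n : ℕ} (M : Matrix (Fin m) (Fin n) ℝ) : ℝ :=
  Real.sqrt ((Mᵀ * M).trace)

/-- Nuclear norm of a real matrix: the trace of the positive semidefinite
square root of `MᵀM` (= sum of singular values). -/
noncomputable def nuclearNorm {m n : ℕ} (M : Matrix (Fin m) (Fin n) ℝ) : ℝ :=
  (psdSqrtOld (Matrix.posSemidef_conjTranspose_mul_self M)).trace

/-- Spectral (ℓ2 → ℓ2 operator) norm of a real matrix: its largest singular value. -/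
noncomputable def opNorm {m n : ℕ} (M : Matrix (Fin m) (Fin n) ℝ) : ℝ :=
  ‖LinearMap.toContinuousLinearMap (Matrix.toEuclideanLin M)‖

/-- The ℓ1 norm of the vectorization of a matrix. -/
noncomputable def vecL1 {m n : ℕ} (M : Matrix (Fin m) (Fin n) ℝ) : ℝ :=
  ∑ i, ∑ j, |M i j|

/-- The ℓ∞ norm of the vectorization of a matrix. -/
noncomputable def vecLinf {m n : ℕ} (M : Matrix (Fin m) (Fin n) ℝ) : ℝ :=
  ⨆ i, ⨆ j, |M i j|

/-- Frobenius (trace) inner product of two matrices. -/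
noncomputable def traceInner {m n : ℕ} (M N : Matrix (Fin m) (Fin n) ℝ) : ℝ :=
  (Mᵀ * N).trace

open scoped Classical in
/-- The inverse of the positive semidefinite square root of a positive semidefinite
matrix (junk value `0` if the matrix is not positive semidefinite). -/
noncomputable def matInvSqrt {r : ℕ} (S : Matrix (Fin r) (Fin r) ℝ) :
    Matrix (Fin r) (Fin r) ℝ :=
  if h : S.PosSemidef then (psdSqrtOld h)⁻¹ else 0

namespace Matrix

lemma trace_conjTranspose_mul_le_sum_sqrt_mul_sqrt {m n : Type*} [Fintype m] [Fintype n]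
    (X Y : Matrix m n ℝ) :
    (Xᴴ * Y).trace ≤ ∑ j, √((Xᴴ * X) j j) * √((Yᴴ * Y) j j) := by
  have hcol (Z : Matrix m n ℝ) (j : n) : (Zᴴ * Z) j j = ∑ i, Z i j ^ 2 := by
    simp [mul_apply, sq]
  simp only [trace, diag_apply, hcol]
  gcongr with j
  simpa [mul_apply] using Real.sum_mul_le_sqrt_mul_sqrt Finset.univ (X · j) (Y · j)

section Spectral

variable {n : Type*} [Fintype n] [DecidableEq n]

lemma trace_psdSqrtOld {A : Matrix n n ℝ} (hA : A.PosSemidef) :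
    (psdSqrtOld hA).trace = ∑ i, √(hA.1.eigenvalues i) := by
  rw [psdSqrtOld, trace_mul_cycle, Unitary.coe_star_mul_self, one_mul, trace_diagonal]
  rfl

lemma IsHermitian.star_eigenvectorUnitary_mul_mul_self {A : Matrix n n ℝ} (hA : A.IsHermitian) :
    star (hA.eigenvectorUnitary : Matrix n n ℝ) * A * hA.eigenvectorUnitary =
      diagonal hA.eigenvalues := by
  simpa using hA.conjStarAlgAut_star_eigenvectorUnitary

end Spectral

section Rank

variable {K : Type*} [Field K] {m n : Type*} [Fintype n]

lemma rank_add_le (A B : Matrix m n K) : (A + B).rank ≤ A.rank + B.rank := by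
  rw [rank, rank, rank, mulVecLin_add]
  refine (Submodule.finrank_mono ?_).trans (Submodule.finrank_add_le_finrank_add_finrank _ _)
  rintro _ ⟨v, rfl⟩
  exact Submodule.add_mem_sup ⟨v, rfl⟩ ⟨v, rfl⟩

lemma rank_sub_mul_mul_le [Fintype m] [DecidableEq m] [DecidableEq n]
    {k l c d : Type*} [Fintype k] [Fintype l] [Fintype c] [Fintype d]
    {Uk : Matrix m k K} {Uc : Matrix m c K} {Vk : Matrix n l K} {Vc : Matrix n d K}
    (hU : Uk * Ukᵀ + Uc * Ucᵀ = 1) (hV : Vk * Vkᵀ + Vc * Vcᵀ = 1) (X : Matrix m n K) :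
    (X - Uc * Ucᵀ * X * Vc * Vcᵀ).rank ≤ Fintype.card k + Fintype.card l := by
  have hsplit : X - Uc * Ucᵀ * X * Vc * Vcᵀ = Uk * (Ukᵀ * X) + Uc * Ucᵀ * X * Vk * Vkᵀ := by
    rw [← eq_sub_iff_add_eq] at hU hV
    rw [← Matrix.mul_assoc, hU, Matrix.mul_assoc _ Vk, hV, Matrix.mul_assoc _ Vc]
    simp only [Matrix.sub_mul, Matrix.mul_sub, Matrix.one_mul, Matrix.mul_one]
    abel
  rw [hsplit]
  exact (rank_add_le _ _).trans (add_le_add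
    ((rank_mul_le_left _ _).trans (rank_le_card_width Uk))
    ((rank_mul_le_right _ _).trans (rank_le_card_height Vkᵀ)))

end Rank

end Matrix

section NuclearNorm

variable {a b : ℕ}

-- With `vⱼ` an orthonormal eigenbasis of `MᴴM`, `tr(WᴴM) = ∑ⱼ ⟪W vⱼ, M vⱼ⟫`,
-- where `‖W vⱼ‖ ≤ 1` and `‖M vⱼ‖ = √μⱼ`.
lemma trace_conjTranspose_mul_le_nuclearNorm {W : Matrix (Fin a) (Fin b) ℝ}
    (hW : (1 - Wᴴ * W).PosSemidef) (M : Matrix (Fin a) (Fin b) ℝ) :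
    (Wᴴ * M).trace ≤ nuclearNorm M := by
  set hM := (posSemidef_conjTranspose_mul_self M).1
  set V : Matrix (Fin b) (Fin b) ℝ := (hM.eigenvectorUnitary : Matrix (Fin b) (Fin b) ℝ)
  have hVV : star V * V = 1 := Unitary.coe_star_mul_self _
  have hVV' : V * star V = 1 := Unitary.coe_mul_star_self _
  have hWV (j : Fin b) : ((W * V)ᴴ * (W * V)) j j ≤ 1 := by
    have h := (hW.conjTranspose_mul_mul_same V).diag_nonneg (i := j)
    rw [Matrix.mul_sub, Matrix.sub_mul, Matrix.mul_one, ← star_eq_conjTranspose, hVV,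
      Matrix.sub_apply, one_apply_eq, sub_nonneg] at h
    rwa [conjTranspose_mul, ← star_eq_conjTranspose, Matrix.mul_assoc, ← Matrix.mul_assoc Wᴴ,
      ← Matrix.mul_assoc]
  have hMV : (M * V)ᴴ * (M * V) = diagonal hM.eigenvalues := by
    rw [conjTranspose_mul, ← star_eq_conjTranspose, Matrix.mul_assoc, ← Matrix.mul_assoc Mᴴ,
      ← Matrix.mul_assoc]
    exact hM.star_eigenvectorUnitary_mul_mul_self
  calc (Wᴴ * M).trace = ((W * V)ᴴ * (M * V)).trace := by
        rw [conjTranspose_mul, Matrix.mul_assoc, trace_mul_comm Vᴴ, Matrix.mul_assoc,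
          Matrix.mul_assoc, ← star_eq_conjTranspose, hVV', Matrix.mul_one]
    _ ≤ ∑ j, √(((W * V)ᴴ * (W * V)) j j) * √(((M * V)ᴴ * (M * V)) j j) :=
        trace_conjTranspose_mul_le_sum_sqrt_mul_sqrt _ _
    _ ≤ ∑ j, 1 * √(hM.eigenvalues j) := by
        gcongr with j
        · exact Real.sqrt_le_one.mpr (hWV j)
        · rw [hMV, diagonal_apply_eq]
    _ = nuclearNorm M := by simp [nuclearNorm, trace_psdSqrtOld]

lemma exists_trace_conjTranspose_mul_eq_nuclearNorm (M : Matrix (Fin a) (Fin b) ℝ) :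
    ∃ W : Matrix (Fin a) (Fin b) ℝ,
      (1 - Wᴴ * W).PosSemidef ∧ (Wᴴ * M).trace = nuclearNorm M := by
  set hM := (posSemidef_conjTranspose_mul_self M).1
  set V : Matrix (Fin b) (Fin b) ℝ := (hM.eigenvectorUnitary : Matrix (Fin b) (Fin b) ℝ)
  set μ := hM.eigenvalues
  have hVV' : V * star V = 1 := Unitary.coe_mul_star_self _
  have hdiag : star V * (Mᴴ * M) * V = diagonal μ := hM.star_eigenvectorUnitary_mul_mul_self
  -- `M * P` is the polar factor of `M`: `P` inverts `√(MᴴM)` off its kernel, since `(√0)⁻¹ = 0`.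
  set g : Fin b → ℝ := fun j => (√(μ j))⁻¹
  have hgμ (j : Fin b) : g j * μ j = √(μ j) := by
    rw [← div_eq_inv_mul, Real.div_sqrt]
  set P := V * diagonal g * star V
  have hP : Pᴴ = P := by
    simp [P, star_eq_conjTranspose, Matrix.mul_assoc]
  refine ⟨M * P, ?_, ?_⟩
  · have hWW : (M * P)ᴴ * (M * P) = V * diagonal (fun j => √(μ j) * (√(μ j))⁻¹) * star V := by
      calc (M * P)ᴴ * (M * P)
          = V * diagonal g * (star V * (Mᴴ * M) * V) * diagonal g * star V := by
            rw [conjTranspose_mul, hP]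
            simp only [P, Matrix.mul_assoc]
        _ = _ := by
            rw [hdiag, Matrix.mul_assoc V, diagonal_mul_diagonal, Matrix.mul_assoc V,
              diagonal_mul_diagonal]
            simp only [hgμ, g]
    have h1 : (1 : Matrix (Fin b) (Fin b) ℝ) = V * diagonal (fun _ => 1) * star V := by
      rw [diagonal_one, Matrix.mul_one, hVV']
    rw [hWW, h1, ← Matrix.sub_mul, ← Matrix.mul_sub, diagonal_sub, star_eq_conjTranspose]
    refine (PosSemidef.diagonal fun j => ?_).mul_mul_conjTranspose_same V
    rcases eq_or_ne (√(μ j)) 0 with h | h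
    · simp [h]
    · simp [mul_inv_cancel₀ h]
  · calc ((M * P)ᴴ * M).trace = (diagonal g * (star V * (Mᴴ * M) * V)).trace := by
          rw [conjTranspose_mul, hP, Matrix.mul_assoc, Matrix.mul_assoc, Matrix.mul_assoc V,
            trace_mul_comm V]
          simp only [Matrix.mul_assoc]
      _ = nuclearNorm M := by
          rw [hdiag, diagonal_mul_diagonal, trace_diagonal, nuclearNorm, trace_psdSqrtOld]
          simp only [hgμ]
          rfl

lemma nuclearNorm_add_le (A B : Matrix (Fin a) (Fin b) ℝ) :
    nuclearNorm (A + B) ≤ nuclearNorm A + nuclearNorm B := by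
  obtain ⟨W, hW, hWtr⟩ := exists_trace_conjTranspose_mul_eq_nuclearNorm (A + B)
  rw [← hWtr, Matrix.mul_add, trace_add]
  exact add_le_add (trace_conjTranspose_mul_le_nuclearNorm hW A)
    (trace_conjTranspose_mul_le_nuclearNorm hW B)

lemma frobNorm_eq_sqrt_sum_eigenvalues (M : Matrix (Fin a) (Fin b) ℝ) :
    frobNorm M = √(∑ i, (posSemidef_conjTranspose_mul_self M).1.eigenvalues i) := by
  rw [frobNorm, ← conjTranspose_eq_transpose_of_trivial,
    (posSemidef_conjTranspose_mul_self M).1.trace_eq_sum_eigenvalues]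
  rfl

lemma nuclearNorm_le_sqrt_mul_frobNorm (M : Matrix (Fin a) (Fin b) ℝ) {r : ℕ}
    (hr : M.rank ≤ r) : nuclearNorm M ≤ √r * frobNorm M := by
  classical
  set hM := posSemidef_conjTranspose_mul_self M
  set μ := hM.1.eigenvalues
  have hsupp : ∑ i, (if μ i ≠ 0 then 1 else 0 : ℝ) ≤ r := by
    rw [Finset.sum_boole, ← Fintype.card_subtype, ← hM.1.rank_eq_card_non_zero_eigs,
      rank_conjTranspose_mul_self]
    exact_mod_cast hr
  calc nuclearNorm M = ∑ i, √(if μ i ≠ 0 then 1 else 0) * √(μ i) := by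
        rw [nuclearNorm, trace_psdSqrtOld]
        refine Finset.sum_congr rfl fun i _ => ?_
        change √(μ i) = _
        by_cases h : μ i = 0 <;> simp [h]
    _ ≤ √(∑ i, if μ i ≠ 0 then 1 else 0) * √(∑ i, μ i) :=
        Real.sum_sqrt_mul_sqrt_le _ (fun i => by positivity) hM.eigenvalues_nonneg
    _ ≤ √r * frobNorm M := by
        rw [frobNorm_eq_sqrt_sum_eigenvalues]
        gcongr

end NuclearNorm

section FrobeniusNorm

variable {p q c d : ℕ}

lemma frobNorm_le_frobNorm_add {X Y : Matrix (Fin p) (Fin q) ℝ} (h : (Xᵀ * Y).trace = 0) :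
    frobNorm X ≤ frobNorm (X + Y) := by
  have hYX : (Yᵀ * X).trace = 0 := by rw [← trace_transpose, transpose_mul, transpose_transpose, h]
  have hY : 0 ≤ (Yᵀ * Y).trace := by
    rw [← conjTranspose_eq_transpose_of_trivial]
    exact (posSemidef_conjTranspose_mul_self Y).trace_nonneg
  unfold frobNorm
  gcongr
  simp only [transpose_add, Matrix.add_mul, Matrix.mul_add, trace_add, h, hYX]
  linarith

lemma trace_transpose_sub_mul_mul_eq_zero {U : Matrix (Fin p) (Fin c) ℝ}
    {V : Matrix (Fin q) (Fin d) ℝ} (hU : Uᵀ * U = 1) (hV : Vᵀ * V = 1)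
    (X : Matrix (Fin p) (Fin q) ℝ) :
    ((X - U * Uᵀ * X * V * Vᵀ)ᵀ * (U * Uᵀ * X * V * Vᵀ)).trace = 0 := by
  set Z := Uᵀ * X * V
  have hY : U * Uᵀ * X * V * Vᵀ = U * Z * Vᵀ := by simp only [Z, Matrix.mul_assoc]
  have hXY : (Xᵀ * (U * Z * Vᵀ)).trace = (Zᵀ * Z).trace := by
    rw [← Matrix.mul_assoc, trace_mul_comm, ← Matrix.mul_assoc, ← Matrix.mul_assoc]
    simp only [Z, transpose_mul, transpose_transpose, Matrix.mul_assoc]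
  have hYY : ((U * Z * Vᵀ)ᵀ * (U * Z * Vᵀ)).trace = (Zᵀ * Z).trace := by
    calc ((U * Z * Vᵀ)ᵀ * (U * Z * Vᵀ)).trace = (V * (Zᵀ * (Uᵀ * U) * Z) * Vᵀ).trace := by
          simp only [transpose_mul, transpose_transpose, Matrix.mul_assoc]
      _ = (Zᵀ * Z).trace := by
          rw [trace_mul_cycle, hU, hV, Matrix.mul_one, Matrix.one_mul]
  rw [hY, transpose_sub, Matrix.sub_mul, trace_sub, hXY, hYY, sub_self]

lemma frobNorm_sub_mul_mul_le {U : Matrix (Fin p) (Fin c) ℝ}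
    {V : Matrix (Fin q) (Fin d) ℝ} (hU : Uᵀ * U = 1) (hV : Vᵀ * V = 1)
    (X : Matrix (Fin p) (Fin q) ℝ) :
    frobNorm (X - U * Uᵀ * X * V * Vᵀ) ≤ frobNorm X := by
  simpa using frobNorm_le_frobNorm_add (trace_transpose_sub_mul_mul_eq_zero hU hV X)

lemma frobNorm_eq_sqrt_sum_sq (M : Matrix (Fin p) (Fin q) ℝ) :
    frobNorm M = √(∑ i, ∑ j, M i j ^ 2) := by
  rw [frobNorm, trace, Finset.sum_comm]
  simp [mul_apply, sq]

end FrobeniusNorm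

section VecL1

variable {p q : ℕ}

lemma vecL1_add_le (M N : Matrix (Fin p) (Fin q) ℝ) : vecL1 (M + N) ≤ vecL1 M + vecL1 N := by
  simp only [vecL1, ← Finset.sum_add_distrib]
  gcongr with i _ j _
  exact abs_add_le _ _

lemma vecL1_le_sqrt_card_mul_frobNorm {M N : Matrix (Fin p) (Fin q) ℝ}
    (S : Finset (Fin p × Fin q)) (hN : ∀ i j, N i j = if (i, j) ∈ S then M i j else 0) :
    vecL1 N ≤ √S.card * frobNorm M := by
  classical
  have h := Real.sum_mul_le_sqrt_mul_sqrt Finset.univ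
    (fun x : Fin p × Fin q => if x ∈ S then 1 else 0) (fun x => |M x.1 x.2|)
  simp only [ite_pow, one_pow, ne_eq, OfNat.ofNat_ne_zero, not_false_eq_true, zero_pow, sq_abs,
    Finset.sum_boole, Finset.filter_mem_eq_inter, Finset.univ_inter] at h
  rw [vecL1, frobNorm_eq_sqrt_sum_sq, ← Fintype.sum_prod_type' (f := fun i j => M i j ^ 2)]
  convert h using 1
  rw [← Fintype.sum_prod_type' (f := fun i j => |N i j|)]
  refine Finset.sum_congr rfl fun x _ => ?_
  by_cases hx : x ∈ S <;> simp [hN, hx]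

end VecL1

theorem stmt_9_general
    (p m q k s : ℕ)
    (Uk : Matrix (Fin p) (Fin k) ℝ) (Uc : Matrix (Fin p) (Fin (p - k)) ℝ)
    (Vk : Matrix (Fin m) (Fin k) ℝ) (Vc : Matrix (Fin m) (Fin (m - k)) ℝ)
    (hUc : Ucᵀ * Uc = 1)
    (hUfull : Uk * Ukᵀ + Uc * Ucᵀ = 1)
    (hVc : Vcᵀ * Vc = 1)
    (hVfull : Vk * Vkᵀ + Vc * Vcᵀ = 1)
    (ΔA ΔA1 ΔA2 : Matrix (Fin p) (Fin m) ℝ)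
    (hΔA2 : ΔA2 = Uc * Ucᵀ * ΔA * Vc * Vcᵀ) (hΔA1 : ΔA1 = ΔA - ΔA2)
    (ΔΦ ΔΦ1 ΔΦ2 : Matrix (Fin p) (Fin q) ℝ)
    (S : Finset (Fin p × Fin q)) (hs : S.card = s)
    (hΔΦ1 : ∀ i j, ΔΦ1 i j = if (i, j) ∈ S then ΔΦ i j else 0)
    (hΔΦ2 : ΔΦ2 = ΔΦ - ΔΦ1)
    (lA lΦ : ℝ) (hlA0 : 0 ≤ lA) (hlΦ0 : 0 ≤ lΦ)
    (hcone : lA * nuclearNorm ΔA2 + lΦ * vecL1 ΔΦ2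
      ≤ 3 * lA * nuclearNorm ΔA1 + 3 * lΦ * vecL1 ΔΦ1) :
    lA * nuclearNorm ΔA + lΦ * vecL1 ΔΦ
      ≤ 4 * (lA * Real.sqrt (2 * k) * frobNorm ΔA
          + lΦ * Real.sqrt s * frobNorm ΔΦ) := by
  have hA : nuclearNorm ΔA ≤ nuclearNorm ΔA1 + nuclearNorm ΔA2 := by
    simpa [hΔA1] using nuclearNorm_add_le ΔA1 ΔA2
  have hΦ : vecL1 ΔΦ ≤ vecL1 ΔΦ1 + vecL1 ΔΦ2 := by
    simpa [hΔΦ2] using vecL1_add_le ΔΦ1 ΔΦ2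
  have hA1 : nuclearNorm ΔA1 ≤ √(2 * k) * frobNorm ΔA := by
    have hrank : ΔA1.rank ≤ 2 * k := by
      simpa [hΔA1, hΔA2, two_mul] using rank_sub_mul_mul_le hUfull hVfull ΔA
    calc nuclearNorm ΔA1 ≤ √((2 * k : ℕ) : ℝ) * frobNorm ΔA1 :=
          nuclearNorm_le_sqrt_mul_frobNorm ΔA1 hrank
      _ ≤ √(2 * k) * frobNorm ΔA := by
          push_cast
          gcongr
          rw [hΔA1, hΔA2]
          exact frobNorm_sub_mul_mul_le hUc hVc ΔA
  have hΦ1 : vecL1 ΔΦ1 ≤ √s * frobNorm ΔΦ := hs ▸ vecL1_le_sqrt_card_mul_frobNorm S hΔΦ1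
  nlinarith [mul_le_mul_of_nonneg_left hA hlA0, mul_le_mul_of_nonneg_left hΦ hlΦ0,
    mul_le_mul_of_nonneg_left hA1 hlA0, mul_le_mul_of_nonneg_left hΦ1 hlΦ0]

/-- Bound on the weighted regularizer `Ψ(Δ)` over the restricted cone, used in
the proof of Theorem 3. -/
theorem stmt_9
    (p m q k s : ℕ)
    (Uk : Matrix (Fin p) (Fin k) ℝ) (Uc : Matrix (Fin p) (Fin (p - k)) ℝ)
    (Vk : Matrix (Fin m) (Fin k) ℝ) (Vc : Matrix (Fin m) (Fin (m - k)) ℝ)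
    (hUk : Ukᵀ * Uk = 1) (hUc : Ucᵀ * Uc = 1) (hUkc : Ukᵀ * Uc = 0)
    (hUfull : Uk * Ukᵀ + Uc * Ucᵀ = 1)
    (hVk : Vkᵀ * Vk = 1) (hVc : Vcᵀ * Vc = 1) (hVkc : Vkᵀ * Vc = 0)
    (hVfull : Vk * Vkᵀ + Vc * Vcᵀ = 1)
    (ΔA ΔA1 ΔA2 : Matrix (Fin p) (Fin m) ℝ)
    (hΔA2 : ΔA2 = Uc * Ucᵀ * ΔA * Vc * Vcᵀ) (hΔA1 : ΔA1 = ΔA - ΔA2)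
    (ΔΦ ΔΦ1 ΔΦ2 : Matrix (Fin p) (Fin q) ℝ)
    (S : Finset (Fin p × Fin q)) (hs : S.card = s)
    (hΔΦ1 : ∀ i j, ΔΦ1 i j = if (i, j) ∈ S then ΔΦ i j else 0)
    (hΔΦ2 : ΔΦ2 = ΔΦ - ΔΦ1)
    (lA lΦ : ℝ) (hlA0 : 0 ≤ lA) (hlΦ0 : 0 ≤ lΦ)
    (hcone : lA * nuclearNorm ΔA2 + lΦ * vecL1 ΔΦ2
      ≤ 3 * lA * nuclearNorm ΔA1 + 3 * lΦ * vecL1 ΔΦ1) :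
    lA * nuclearNorm ΔA + lΦ * vecL1 ΔΦ
      ≤ 4 * (lA * Real.sqrt (2 * k) * frobNorm ΔA
          + lΦ * Real.sqrt s * frobNorm ΔΦ) :=
  stmt_9_general p m q k s Uk Uc Vk Vc hUc hUfull hVc hVfull ΔA ΔA1 ΔA2 hΔA2 hΔA1 ΔΦ ΔΦ1 ΔΦ2 S hs
    hΔΦ1 hΔΦ2 lA lΦ hlA0 hlΦ0 hcone
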